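/- Let n ≥ 3 and let x_1, …, x_n ∈ ℝ² with indices modulo n, edge vectors e_J = x_{J+1} − x_J, rot(a,b) = (b,−a), signed area |E| = (1/2)∑_{J=1}^n (x_{J,1} x_{J+1,2} − x_{J+1,1} x_{J,2}) assumed nonzero, and R_I = (1/2)(rot(e_{I−1}) + rot(e_I)). Then for every a ∈ ℝ² and c ∈ ℝ, the one-subcell smoothed gradient applied to the affine nodal data u_I = a · x_I + c reproduces the exact gradient: (1/|E|) ∑_{I=1}^n (a · x_I + c) R_I = a. In other words, the one-subcell smoothed finite element method on an arbitrary polygon passes the linear patch test exactly. -/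
import Mathlib


open scoped BigOperators

/-- Rotation by −90°: `rot (a, b) = (b, −a)`. -/
def rot (p : ℝ × ℝ) : ℝ × ℝ := (p.2, -p.1)

/-- Edge vector `e_J = x_{J+1} − x_J` of a polygon with vertices indexed mod `n`. -/
def edge (n : ℕ) (x : ZMod n → ℝ × ℝ) (J : ZMod n) : ℝ × ℝ := x (J + 1) - x J

/-- VEM consistency vector `R_I = (1/2)(rot(e_{I−1}) + rot(e_I))`. -/
noncomputable def Rvec (n : ℕ) (x : ZMod n → ℝ × ℝ) (I : ZMod n) : ℝ × ℝ :=
  (1 / 2 : ℝ) • (rot (edge n x (I - 1)) + rot (edge n x I))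

/-- Signed area `|E| = (1/2) ∑_J (x_{J,1} x_{J+1,2} − x_{J+1,1} x_{J,2})`. -/
noncomputable def signedArea (n : ℕ) [NeZero n] (x : ZMod n → ℝ × ℝ) : ℝ :=
  (1 / 2 : ℝ) * ∑ J : ZMod n, ((x J).1 * (x (J + 1)).2 - (x (J + 1)).1 * (x J).2)

/-- Euclidean dot product on `ℝ²`. -/
def dot2 (u w : ℝ × ℝ) : ℝ := u.1 * w.1 + u.2 * w.2

/-- Sums over `ZMod n` are invariant under index shift `J ↦ J + 1`. -/
lemma shift_sum {n : ℕ} [NeZero n] (f : ZMod n → ℝ) :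
    ∑ J : ZMod n, f (J + 1) = ∑ J : ZMod n, f J :=
  Fintype.sum_equiv (Equiv.addRight 1) _ _ (fun _ => rfl)

/-- Sums over `ZMod n` are invariant under index shift `J ↦ J - 1`. -/
lemma shift_sum' {n : ℕ} [NeZero n] (f : ZMod n → ℝ) :
    ∑ J : ZMod n, f (J - 1) = ∑ J : ZMod n, f J := by
  have h := shift_sum (fun J : ZMod n => f (J - 1))
  simpa using h.symm

lemma key_fst {n : ℕ} [NeZero n] (x : ZMod n → ℝ × ℝ) (a : ℝ × ℝ) (c : ℝ) :
    ∑ I : ZMod n, (dot2 a (x I) + c) * (Rvec n x I).1 = signedArea n x * a.1 := by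
  rw [← sub_eq_zero, signedArea, mul_comm, Finset.mul_sum, Finset.mul_sum,
    ← Finset.sum_sub_distrib]
  set H : ZMod n → ℝ := fun I =>
    a.1 * (x (I + 1)).1 * (x I).2 + a.2 * (x I).2 * (x (I + 1)).2 + c * ((x (I + 1)).2 + (x I).2) with hH
  calc ∑ I : ZMod n, ((dot2 a (x I) + c) * (Rvec n x I).1
          - a.1 * ((1 / 2 : ℝ) * ((x I).1 * (x (I + 1)).2 - (x (I + 1)).1 * (x I).2)))
      = ∑ I : ZMod n, (H I - H (I - 1)) * (1 / 2 : ℝ) := by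
        refine Finset.sum_congr rfl fun I _ => ?_
        simp only [Rvec, rot, edge, dot2, hH, Prod.smul_fst, Prod.fst_add, Prod.snd_sub,
          smul_eq_mul, sub_add_cancel]
        ring
    _ = 0 := by
        rw [← Finset.sum_mul, Finset.sum_sub_distrib, shift_sum' H, sub_self, zero_mul]

lemma key_snd {n : ℕ} [NeZero n] (x : ZMod n → ℝ × ℝ) (a : ℝ × ℝ) (c : ℝ) :
    ∑ I : ZMod n, (dot2 a (x I) + c) * (Rvec n x I).2 = signedArea n x * a.2 := by
  rw [← sub_eq_zero, signedArea, mul_comm, Finset.mul_sum, Finset.mul_sum,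
    ← Finset.sum_sub_distrib]
  set H : ZMod n → ℝ := fun I =>
    -(a.1 * (x I).1 * (x (I + 1)).1) - a.2 * (x I).1 * (x (I + 1)).2 - c * ((x (I + 1)).1 + (x I).1)
    with hH
  calc ∑ I : ZMod n, ((dot2 a (x I) + c) * (Rvec n x I).2
          - a.2 * ((1 / 2 : ℝ) * ((x I).1 * (x (I + 1)).2 - (x (I + 1)).1 * (x I).2)))
      = ∑ I : ZMod n, (H I - H (I - 1)) * (1 / 2 : ℝ) := by
        refine Finset.sum_congr rfl fun I _ => ?_
        simp only [Rvec, rot, edge, dot2, hH, Prod.smul_snd, Prod.snd_add, Prod.fst_sub,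
          smul_eq_mul, sub_add_cancel]
        ring
    _ = 0 := by
        rw [← Finset.sum_mul, Finset.sum_sub_distrib, shift_sum' H, sub_self, zero_mul]

/-- **Linear patch test for the one-subcell SFEM on an arbitrary polygon.**
The one-subcell smoothed gradient applied to affine nodal data
`u_I = a · x_I + c` reproduces the exact gradient:
`(1/|E|) ∑_I (a · x_I + c) R_I = a`. -/
theorem sfem_one_subcell_linear_patch_test
    (n : ℕ) [NeZero n] (hn : 3 ≤ n)
    (x : ZMod n → ℝ × ℝ)
    (hA : signedArea n x ≠ 0) :
    ∀ (a : ℝ × ℝ) (c : ℝ),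
      (signedArea n x)⁻¹ • ∑ I : ZMod n, (dot2 a (x I) + c) • Rvec n x I = a := by
  intro a c
  have key : ∑ I : ZMod n, (dot2 a (x I) + c) • Rvec n x I = signedArea n x • a := by
    apply Prod.ext
    · rw [Prod.fst_sum, Prod.smul_fst, smul_eq_mul, ← key_fst x a c]
      exact Finset.sum_congr rfl fun I _ => by simp [smul_eq_mul]
    · rw [Prod.snd_sum, Prod.smul_snd, smul_eq_mul, ← key_snd x a c]
      exact Finset.sum_congr rfl fun I _ => by simp [smul_eq_mul]
  rw [key, smul_smul, inv_mul_cancel₀ hA, one_smul]
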